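/- arXiv:2305.08177 — 5 statements merged into one kernel-verified Lean document; each statement's English description precedes it below -/
import Mathlib

section
/- Let Q ⊂ ℝ^N be a d-dimensional rational polytope and let a be the minimum positive integer such that aQ is a lattice polytope. Then for every real number k ≥ a(d+1), every lattice point m ∈ kQ ∩ ℤ^N can be written as m = m₁ + m₂ with m₁ ∈ (k−a)Q ∩ ℤ^N and m₂ ∈ aQ ∩ ℤ^N. -/
open Pointwise

/-- A lattice polytope in `ℝ^N`: the convex hull of finitely many integer points. -/
def IsLatticePolytope (N : ℕ) (P : Set (Fin N → ℝ)) : Prop :=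
  ∃ F : Finset (Fin N → ℤ),
    P = convexHull ℝ ((fun (m : Fin N → ℤ) (i : Fin N) => (m i : ℝ)) '' ↑F)

lemma my_vectorSpan_smul_eq {E : Type*} [AddCommGroup E] [Module ℝ E] {c : ℝ} (hc : c ≠ 0)
    (s : Set E) : vectorSpan ℝ (c • s) = vectorSpan ℝ s := by
  rw [vectorSpan_def, vectorSpan_def]
  have h : (c • s) -ᵥ (c • s) = c • (s -ᵥ s) := by
    ext x
    simp only [Set.mem_vsub, Set.mem_smul_set, vsub_eq_sub]
    constructor
    · rintro ⟨_, ⟨p, hp, rfl⟩, _, ⟨q, hq, rfl⟩, rfl⟩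
      exact ⟨p - q, ⟨p, hp, q, hq, rfl⟩, smul_sub c p q⟩
    · rintro ⟨_, ⟨p, hp, q, hq, rfl⟩, rfl⟩
      exact ⟨c • p, ⟨p, hp, rfl⟩, c • q, ⟨q, hq, rfl⟩, (smul_sub c p q).symm⟩
  rw [h, Submodule.span_smul_eq_of_isUnit _ _ (isUnit_iff_ne_zero.mpr hc)]

lemma my_sum_smul_mem {E : Type*} [AddCommGroup E] [Module ℝ E]
    (S : Finset E) (u : E → ℝ) (s : Set E) (hu : ∀ y ∈ S, 0 ≤ u y)
    (hz : ∀ y ∈ S, y ∈ s) (hs : s.Nonempty) {c : ℝ} (hc : ∑ y ∈ S, u y = c) :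
    (∑ y ∈ S, u y • y) ∈ c • convexHull ℝ s := by
  have hc0 : 0 ≤ c := hc ▸ Finset.sum_nonneg hu
  rcases hc0.eq_or_lt with h | h
  · have hz0 : ∀ y ∈ S, u y = 0 :=
      (Finset.sum_eq_zero_iff_of_nonneg hu).mp (hc.trans h.symm)
    have : (∑ y ∈ S, u y • y) = 0 := by
      apply Finset.sum_eq_zero
      intro y hy; rw [hz0 y hy, zero_smul]
    rw [this, ← h, Set.zero_smul_set (convexHull_nonempty_iff.mpr hs)]
    exact Set.zero_mem_zero
  · have hmem : S.centerMass u id ∈ convexHull ℝ s :=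
      S.centerMass_mem_convexHull hu (hc ▸ h) hz
    have heq : (∑ y ∈ S, u y • y) = c • S.centerMass u id := by
      rw [Finset.centerMass, hc, smul_smul, mul_inv_cancel₀ h.ne', one_smul]
      simp [id]
    rw [heq]
    exact Set.smul_mem_smul_set hmem

/-- If `Q ⊆ ℝ^N` is a `d`-dimensional rational polytope and `a` is the minimal
positive integer such that `aQ` is a lattice polytope, then for every real `k ≥ a(d+1)` every
lattice point of `kQ` is a sum of a lattice point of `(k-a)Q` and a lattice point of `aQ`. -/
theorem lattice_point_decomposition {N : ℕ} (Q : Set (Fin N → ℝ)) (d : ℕ)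
    (hQ : ∃ F : Finset (Fin N → ℚ),
      Q = convexHull ℝ ((fun (v : Fin N → ℚ) (i : Fin N) => (v i : ℝ)) '' ↑F))
    (hdim : Module.finrank ℝ (affineSpan ℝ Q).direction = d)
    (a : ℕ) (ha : 0 < a)
    (haQ : IsLatticePolytope N ((a : ℝ) • Q))
    (hamin : ∀ b : ℕ, 0 < b → IsLatticePolytope N ((b : ℝ) • Q) → a ≤ b)
    (k : ℝ) (hk : (a : ℝ) * (d + 1) ≤ k)
    (m : Fin N → ℤ) (hm : (fun i => (m i : ℝ)) ∈ k • Q) :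
    ∃ m₁ m₂ : Fin N → ℤ, m = m₁ + m₂ ∧
      (fun i => (m₁ i : ℝ)) ∈ (k - (a : ℝ)) • Q ∧
      (fun i => (m₂ i : ℝ)) ∈ (a : ℝ) • Q := by
  classical
  obtain ⟨F, hF⟩ := haQ
  set g : (Fin N → ℤ) → (Fin N → ℝ) := fun m i => (m i : ℝ) with hg
  have haR : (0:ℝ) < a := by exact_mod_cast ha
  set t : ℝ := k / a with ht
  have htd : (d : ℝ) + 1 ≤ t := by
    rw [ht, le_div_iff₀ haR]; linarith
  have ht1 : (1:ℝ) ≤ t := le_trans (by have := Nat.cast_nonneg (α := ℝ) d; linarith) htd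
  -- m ∈ t • (a • Q)
  have hmt : g m ∈ t • ((a:ℝ) • Q) := by
    rw [smul_smul, div_mul_cancel₀ k haR.ne']
    exact hm
  rw [hF] at hmt
  obtain ⟨p, hp, hpm⟩ := hmt
  rw [convexHull_eq_union] at hp
  simp only [Set.mem_iUnion] at hp
  obtain ⟨S, hSsub, hSai, hpS⟩ := hp
  -- S is nonempty
  have hSne : S.Nonempty := by
    rcases S.eq_empty_or_nonempty with h | h
    · exfalso; rw [h] at hpS; simp at hpS
    · exact h
  -- cardinality bound : S.card ≤ d + 1
  have hdim' : Module.finrank ℝ (vectorSpan ℝ (g '' ↑F)) = d := by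
    have h1 : vectorSpan ℝ (g '' ↑F) = vectorSpan ℝ (convexHull ℝ (g '' ↑F)) := by
      rw [← direction_affineSpan, ← direction_affineSpan, affineSpan_convexHull]
    have h2 : vectorSpan ℝ (convexHull ℝ (g '' ↑F)) = vectorSpan ℝ Q := by
      rw [← hF, my_vectorSpan_smul_eq haR.ne' Q]
    rw [h1, h2, ← direction_affineSpan]
    exact hdim
  have hcard : S.card ≤ d + 1 := by
    obtain ⟨n, hn⟩ : ∃ n, S.card = n + 1 :=
      ⟨S.card - 1, (Nat.succ_pred_eq_of_pos (Finset.card_pos.mpr hSne)).symm⟩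
    have hfin : Module.finrank ℝ (vectorSpan ℝ (Set.range ((↑) : ↥S → (Fin N → ℝ)))) = n :=
      hSai.finrank_vectorSpan (by simpa using hn)
    have hle : vectorSpan ℝ (Set.range (Subtype.val : ↥S → (Fin N → ℝ))) ≤
        vectorSpan ℝ (g '' ↑F) :=
      vectorSpan_mono ℝ (by rw [Subtype.range_coe]; exact hSsub)
    have := Submodule.finrank_mono hle
    rw [hfin, hdim'] at this
    omega
  -- convex combination
  rw [Finset.convexHull_eq] at hpS
  obtain ⟨w, hw0, hw1, hwc⟩ := hpS
  set u : (Fin N → ℝ) → ℝ := fun y => t * w y with hu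
  have hu0 : ∀ y ∈ S, 0 ≤ u y := fun y hy => mul_nonneg (by linarith) (hw0 y hy)
  have husum : ∑ y ∈ S, u y = t := by
    rw [hu, ← Finset.mul_sum, hw1, mul_one]
  have hp' : p = ∑ y ∈ S, w y • y := by
    rw [← hwc, Finset.centerMass_eq_of_sum_1 _ _ hw1]
    simp [id]
  have hmsum : g m = ∑ y ∈ S, u y • y := by
    rw [← hpm]
    show t • p = _
    rw [hp', Finset.smul_sum]
    simp [u, smul_smul]
  -- pigeonhole: some u y₀ ≥ 1
  obtain ⟨y₀, hy₀S, hy₀⟩ : ∃ y₀ ∈ S, 1 ≤ u y₀ := by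
    by_contra hcon
    push_neg at hcon
    have : ∑ y ∈ S, u y < ∑ y ∈ S, (1:ℝ) :=
      Finset.sum_lt_sum_of_nonempty hSne hcon
    rw [husum, Finset.sum_const, nsmul_eq_mul, mul_one] at this
    have : t < (d:ℝ) + 1 := lt_of_lt_of_le this (by exact_mod_cast hcard)
    linarith
  obtain ⟨m₂, hm₂F, hm₂⟩ := hSsub hy₀S
  -- define m₁
  refine ⟨m - m₂, m₂, by ring, ?_, ?_⟩
  · -- m - m₂ ∈ (k - a) Q
    have hcast : (fun i => ((m - m₂) i : ℝ)) = g m - g m₂ := by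
      funext i; simp [g]
    set u' : (Fin N → ℝ) → ℝ := fun y => u y - if y = y₀ then 1 else 0 with hu'
    have hsub : g m - g m₂ = ∑ y ∈ S, u' y • y := by
      rw [hm₂, hmsum]
      simp only [u', sub_smul, Finset.sum_sub_distrib, ite_smul, one_smul, zero_smul]
      rw [Finset.sum_ite_eq' S y₀ (fun y => y), if_pos hy₀S]
    have hu'0 : ∀ y ∈ S, 0 ≤ u' y := by
      intro y hy
      by_cases h : y = y₀
      · subst h; simp [u']; linarith
      · simp [u', h]; exact hu0 y hy
    have hu'sum : ∑ y ∈ S, u' y = t - 1 := by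
      simp only [u', Finset.sum_sub_distrib, husum]
      rw [Finset.sum_ite_eq' S y₀ (fun _ => (1:ℝ)), if_pos hy₀S]
    have hmem := my_sum_smul_mem S u' (g '' ↑F) hu'0
      (fun y hy => hSsub hy) ⟨g m₂, Set.mem_image_of_mem g hm₂F⟩ hu'sum
    rw [hcast, hsub]
    have hQeq : (t - 1) • convexHull ℝ (g '' ↑F) = (k - (a:ℝ)) • Q := by
      rw [← hF, smul_smul]
      congr 1
      rw [ht]
      field_simp
    rw [← hQeq]
    exact hmem
  · -- m₂ ∈ a Q
    rw [hF]
    have : g m₂ ∈ convexHull ℝ (g '' ↑F) :=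
      subset_convexHull ℝ _ (Set.mem_image_of_mem g hm₂F)
    exact this
end

section
/- Let Q ⊂ ℝ^N be a rational polytope with 0 ∈ int(Q), and define d_Q(x) := inf{t ∈ ℝ_{≥0} : x ∈ tQ} for x ∈ ℝ^N. Define C₂ := sup_{x ∈ ℤ^N} (⌈d_Q(x)⌉ − d_Q(x)). Then C₂ < 1, and C₂ ∈ {0} ∪ [1/2, 1); that is, C₂ never lies in the open interval (0, 1/2). -/
open Pointwise

/-- The gauge (Minkowski functional) of `Q`: `d_Q(x) = inf {t ≥ 0 | x ∈ tQ}`. -/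
noncomputable def polyGauge {N : ℕ} (Q : Set (Fin N → ℝ)) (x : Fin N → ℝ) : ℝ :=
  sInf {t : ℝ | 0 ≤ t ∧ x ∈ t • Q}

/-!
The gauge of a polytope `Q` with `0 ∈ int Q` is piecewise rational-linear. For `x ≠ 0` the point
`y = x / d_Q(x)` lies on the boundary of `Q`, hence on a supporting hyperplane `f = c` with `c > 0`.
By Carathéodory, `y` is a positive convex combination of affinely independent vertices, which must
all lie on that hyperplane; since it misses `0` they are linearly independent, so some rational
functional `β` equals `1` on all of them, and then `d_Q(x) = β(x)`. Only finitely many vertex sets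
occur, so a common denominator `D` of the `β`s gives `D · d_Q(m) ∈ ℤ` for `m ∈ ℤ^N`, whence
`⌈d_Q(m)⌉ - d_Q(m) ≤ 1 - 1/D`. For the gap: if `⌈d⌉ - d < 1/2` then `⌈2d⌉ - 2d = 2(⌈d⌉ - d)`, and
`d_Q(2m) = 2 d_Q(m)`, so a supremum in `(0, 1/2)` would be exceeded by doubling a near-optimal `m`.
-/

open Set Topology

theorem Convex.exists_dual_le_of_notMem_interior {E : Type*} [TopologicalSpace E] [AddCommGroup E]
    [IsTopologicalAddGroup E] [Module ℝ E] [ContinuousSMul ℝ E] [LocallyConvexSpace ℝ E]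
    {Q : Set E} (hQ : Convex ℝ Q) (h0 : (0 : E) ∈ interior Q) {y : E} (hy : y ∉ interior Q) :
    ∃ f : StrongDual ℝ E, 0 < f y ∧ ∀ a ∈ Q, f a ≤ f y := by
  obtain ⟨f, hf⟩ := geometric_hahn_banach_open_point hQ.interior isOpen_interior hy
  refine ⟨f, by simpa using hf 0 h0, fun a ha => ?_⟩
  have ha' : a ∈ closure (interior Q) := by
    rw [hQ.closure_interior_eq_closure_of_nonempty_interior ⟨0, h0⟩]
    exact subset_closure ha
  exact closure_minimal (fun b hb => (hf b hb).le) (isClosed_le f.continuous continuous_const) ha'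

theorem AffineIndependent.linearIndependent_of_apply_eq {k V ι : Type*} [Field k] [AddCommGroup V]
    [Module k V] {z : ι → V} (hz : AffineIndependent k z) (f : V →ₗ[k] k) {c : k} (hc : c ≠ 0)
    (hf : ∀ i, f (z i) = c) : LinearIndependent k z := by
  refine linearIndependent_iff'.2 fun s g hg => hz.eq_zero_of_sum_eq_zero ?_ hg
  have := congrArg f hg
  simp only [map_sum, map_smul, hf, smul_eq_mul, map_zero, ← Finset.sum_mul] at this
  exact (mul_eq_zero.1 this).resolve_right hc

theorem exists_linearIndepOn_subset_gauge_convexHull_eq {E : Type*} [NormedAddCommGroup E]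
    [NormedSpace ℝ E] [FiniteDimensional ℝ E] {s : Set E} (hs : IsCompact (convexHull ℝ s))
    (h0 : (0 : E) ∈ interior (convexHull ℝ s)) (x : E) :
    ∃ S ⊆ s, LinearIndepOn ℝ id S ∧
      ∀ φ : E →ₗ[ℝ] ℝ, (∀ v ∈ S, φ v = 1) → gauge (convexHull ℝ s) x = φ x := by
  set Q := convexHull ℝ s
  rcases eq_or_ne x 0 with rfl | hx
  · exact ⟨∅, empty_subset _, linearIndepOn_empty _ _, fun φ _ => by simp⟩
  have hQ0 : Q ∈ 𝓝 0 := mem_interior_iff_mem_nhds.1 h0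
  have hd : 0 < gauge Q x :=
    (gauge_pos (absorbent_nhds_zero hQ0) (hs.isVonNBounded ℝ)).2 hx
  set y := (gauge Q x)⁻¹ • x
  have hgy : gauge Q y = 1 := by
    rw [gauge_smul_of_nonneg (inv_nonneg.2 hd.le), smul_eq_mul, inv_mul_cancel₀ hd.ne']
  have hyQ : y ∈ Q := by
    rw [← hs.isClosed.closure_eq]
    exact (gauge_le_one_iff_mem_closure (convex_convexHull ℝ s) hQ0).1 hgy.le
  have hy : y ∉ interior Q := fun h => (interior_subset_gauge_lt_one Q h).ne hgy
  obtain ⟨f, hfy, hfQ⟩ := (convex_convexHull ℝ s).exists_dual_le_of_notMem_interior h0 hy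
  obtain ⟨ι, _, z, w, hzs, hz, hw0, hw1, hwz⟩ := eq_pos_convex_span_of_mem_convexHull hyQ
  -- a positive convex combination of values `≤ f y` equals `f y` only if all of them do
  have hfz : ∀ i, f (z i) = f y := by
    by_contra! ⟨i, hi⟩
    have hlt : ∑ j, w j * f (z j) < ∑ j, w j * f y :=
      Finset.sum_lt_sum (fun j _ => mul_le_mul_of_nonneg_left
          (hfQ _ (subset_convexHull ℝ s (hzs (mem_range_self j)))) (hw0 j).le)
        ⟨i, Finset.mem_univ i, mul_lt_mul_of_pos_left
          ((hfQ _ (subset_convexHull ℝ s (hzs (mem_range_self i)))).lt_of_ne hi) (hw0 i)⟩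
    have hfwz : ∑ j, w j * f (z j) = f y := by simp [← hwz, map_sum]
    rw [← Finset.sum_mul, hw1, one_mul, hfwz] at hlt
    exact hlt.false
  refine ⟨range z, hzs,
    (hz.linearIndependent_of_apply_eq f.toLinearMap hfy.ne' hfz).linearIndepOn_id,
    fun φ hφ => ?_⟩
  have hφy : φ y = 1 := by
    simp [← hwz, map_sum, hφ _ (mem_range_self _), hw1]
  calc gauge Q x = gauge Q x * φ y := by rw [hφy, mul_one]
    _ = φ x := by rw [← smul_eq_mul, ← map_smul, smul_inv_smul₀ hd.ne']

theorem LinearIndepOn.exists_linearMap_eq_one {K V : Type*} [DivisionRing K] [AddCommGroup V]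
    [Module K V] {s : Set V} (hs : LinearIndepOn K id s) : ∃ φ : V →ₗ[K] K, ∀ v ∈ s, φ v = 1 :=
  ⟨(Module.Basis.extend hs).sumCoords, fun v hv => by
    simpa using (Module.Basis.extend hs).sumCoords_self_apply (i := ⟨v, hs.subset_extend _ hv⟩)⟩

theorem exists_rat_sum_mul_eq_one {ι : Type*} [Fintype ι] {S : Set (ι → ℝ)}
    (hSℚ : S ⊆ range fun (v : ι → ℚ) i => (v i : ℝ)) (hS : LinearIndepOn ℝ id S) :
    ∃ β : ι → ℚ, ∀ v ∈ S, ∑ i, v i * β i = 1 := by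
  classical
  let c : (ι → ℚ) →ₗ[ℚ] ι → ℝ := (Algebra.linearMap ℚ ℝ).compLeft ι
  have hc : Function.Injective c := fun u v h => funext fun i => by
    simpa [c] using congrFun h i
  have hST : S = c '' (c ⁻¹' S) := (image_preimage_eq_of_subset fun v hv => by
    obtain ⟨u, rfl⟩ := hSℚ hv; exact ⟨u, funext fun i => by simp [c]⟩).symm
  rw [hST, ← linearIndepOn_iff_image hc.injOn] at hS
  obtain ⟨φ, hφ⟩ := LinearIndepOn.exists_linearMap_eq_one (K := ℚ) (s := c ⁻¹' S)
    (LinearIndependent.of_comp c (hS.restrict_scalars' ℚ))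
  refine ⟨fun i => φ (Pi.single i 1), ?_⟩
  rw [hST]
  rintro _ ⟨u, hu, rfl⟩
  have := hφ u hu
  have hsingle (i : ι) : (fun j => if i = j then (1 : ℚ) else 0) = Pi.single i 1 :=
    funext fun j => by simp [Pi.single_apply, eq_comm]
  rw [LinearMap.pi_apply_eq_sum_univ φ u] at this
  simpa [c, hsingle] using congrArg ((↑) : ℚ → ℝ) this

section RationalPolytope

variable {ι : Type*} [Fintype ι] {F : Set (ι → ℚ)}

theorem exists_finset_forall_gauge_eq_sum_mul (hF : F.Finite)
    (h0 : (0 : ι → ℝ) ∈ interior (convexHull ℝ ((fun (v : ι → ℚ) i => (v i : ℝ)) '' F))) :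
    ∃ B : Finset (ι → ℚ), ∀ x : ι → ℝ, ∃ β ∈ B,
      gauge (convexHull ℝ ((fun (v : ι → ℚ) i => (v i : ℝ)) '' F)) x = ∑ i, x i * β i := by
  set s := (fun (v : ι → ℚ) i => (v i : ℝ)) '' F
  have hs : s.Finite := hF.image _
  have hchoice (S : Set (ι → ℝ)) : ∃ β : ι → ℚ,
      (∃ β' : ι → ℚ, ∀ v ∈ S, ∑ i, v i * β' i = 1) → ∀ v ∈ S, ∑ i, v i * β i = 1 := by
    by_cases h : ∃ β' : ι → ℚ, ∀ v ∈ S, ∑ i, v i * β' i = 1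
    · exact ⟨h.choose, fun _ => h.choose_spec⟩
    · exact ⟨0, fun h' => (h h').elim⟩
  choose β hβ using hchoice
  refine ⟨(hs.finite_subsets.image β).toFinset, fun x => ?_⟩
  obtain ⟨S, hSs, hS, hgauge⟩ :=
    exists_linearIndepOn_subset_gauge_convexHull_eq (hs.isCompact_convexHull ℝ) h0 x
  have hβS := hβ S (exists_rat_sum_mul_eq_one (hSs.trans (image_subset_range _ _)) hS)
  refine ⟨β S, by simpa using ⟨S, hSs, rfl⟩, ?_⟩
  simpa [Fintype.linearCombination_apply] using
    hgauge (Fintype.linearCombination ℝ fun i => (β S i : ℝ)) fun v hv => by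
      simpa [Fintype.linearCombination_apply] using hβS v hv

theorem Rat.exists_intCast_eq_mul_of_den_dvd {q : ℚ} {D : ℕ} (h : q.den ∣ D) :
    ∃ k : ℤ, (D : ℚ) * q = k := by
  obtain ⟨c, rfl⟩ := h
  exact ⟨c * q.num, by push_cast; rw [mul_comm (q.den : ℚ), mul_assoc, Rat.den_mul_eq_num]⟩

theorem exists_nat_mul_gauge_eq_intCast (hF : F.Finite)
    (h0 : (0 : ι → ℝ) ∈ interior (convexHull ℝ ((fun (v : ι → ℚ) i => (v i : ℝ)) '' F))) :
    ∃ D : ℕ, 0 < D ∧ ∀ m : ι → ℤ, ∃ k : ℤ,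
      D * gauge (convexHull ℝ ((fun (v : ι → ℚ) i => (v i : ℝ)) '' F)) (fun i => (m i : ℝ)) =
        k := by
  obtain ⟨B, hB⟩ := exists_finset_forall_gauge_eq_sum_mul hF h0
  refine ⟨∏ β ∈ B, ∏ i, (β i).den, Finset.prod_pos fun β _ => Finset.prod_pos fun i _ => (β i).pos,
    fun m => ?_⟩
  obtain ⟨β, hβB, hβ⟩ := hB fun i => (m i : ℝ)
  have hden (i : ι) : (β i).den ∣ ∏ β ∈ B, ∏ i, (β i).den :=
    (Finset.dvd_prod_of_mem (fun i => (β i).den) (Finset.mem_univ i)).trans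
      (Finset.dvd_prod_of_mem (fun β : ι → ℚ => ∏ i, (β i).den) hβB)
  choose k hk using fun i => Rat.exists_intCast_eq_mul_of_den_dvd (hden i)
  refine ⟨∑ i, m i * k i, ?_⟩
  rw [hβ, Finset.mul_sum]
  push_cast
  refine Finset.sum_congr rfl fun i _ => ?_
  rw [mul_left_comm]
  exact congrArg _ (mod_cast hk i)

end RationalPolytope

section Ceil

variable {K : Type*} [Field K] [LinearOrder K] [IsStrictOrderedRing K] [FloorRing K]

theorem Int.ceil_sub_le_one_sub_inv {d : K} {D : ℕ} (hD : 0 < D) {k : ℤ} (hk : D * d = k) :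
    (⌈d⌉ : K) - d ≤ 1 - 1 / D := by
  have hD' : (0 : K) < D := by exact_mod_cast hD
  have hlt : D * ⌈d⌉ - k < D := by
    have : (D : K) * ((⌈d⌉ : K) - d) < D * 1 :=
      mul_lt_mul_of_pos_left (by linarith [Int.ceil_lt_add_one d]) hD'
    rw [mul_sub, hk, mul_one] at this
    exact_mod_cast this
  have hle : (D : K) * ((⌈d⌉ : K) - d) ≤ D * (1 - 1 / D) := by
    rw [mul_sub, hk, mul_one_sub, mul_one_div_cancel hD'.ne']
    exact_mod_cast Int.le_sub_one_of_lt hlt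
  exact (mul_le_mul_iff_of_pos_left hD').1 hle

theorem Int.ceil_two_mul_sub_eq {d : K} (h : (⌈d⌉ : K) - d < 1 / 2) :
    (⌈2 * d⌉ : K) - 2 * d = 2 * (⌈d⌉ - d) := by
  have : ⌈2 * d⌉ = 2 * ⌈d⌉ := by
    rw [Int.ceil_eq_iff]
    push_cast
    constructor <;> linarith [Int.le_ceil d]
  rw [this]
  push_cast
  ring

end Ceil

theorem csSup_eq_zero_or_half_le {S : Set ℝ} (hS : BddAbove S) (h0 : 0 ∈ S)
    (h2 : ∀ s ∈ S, s < 1 / 2 → 2 * s ∈ S) : sSup S = 0 ∨ 1 / 2 ≤ sSup S := by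
  by_contra! ⟨hne, hlt⟩
  have hpos : 0 < sSup S := (le_csSup hS h0).lt_of_ne' hne
  obtain ⟨s, hs, hsC⟩ := exists_lt_of_lt_csSup ⟨0, h0⟩ (half_lt_self hpos)
  have := le_csSup hS (h2 s hs ((le_csSup hS hs).trans_lt hlt))
  linarith

theorem polyGauge_eq_gauge {N : ℕ} {Q : Set (Fin N → ℝ)} (hQ : Q.Nonempty) (x : Fin N → ℝ) :
    polyGauge Q x = gauge Q x := by
  rcases eq_or_ne x 0 with rfl | hx
  · rw [gauge_zero]
    exact IsLeast.csInf_eq ⟨⟨le_rfl, by simp [zero_smul_set hQ]⟩, fun t ht => ht.1⟩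
  · unfold polyGauge gauge
    congr 1
    ext t
    refine ⟨fun ⟨ht, hxt⟩ => ⟨ht.lt_of_ne ?_, hxt⟩, fun ⟨ht, hxt⟩ => ⟨ht.le, hxt⟩⟩
    rintro rfl
    exact hx (by simpa [zero_smul_set hQ] using hxt)

/-- For a rational polytope `Q` with `0 ∈ int(Q)`, the quantity
`C₂ = sup_{x ∈ ℤ^N} (⌈d_Q(x)⌉ − d_Q(x))` satisfies `C₂ < 1` and `C₂ ∈ {0} ∪ [1/2, 1)`. -/
theorem gauge_defect_lt_one_and_gap {N : ℕ} (Q : Set (Fin N → ℝ))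
    (hQ : ∃ F : Finset (Fin N → ℚ),
      Q = convexHull ℝ ((fun (v : Fin N → ℚ) (i : Fin N) => (v i : ℝ)) '' ↑F))
    (h0 : (0 : Fin N → ℝ) ∈ interior Q) :
    sSup (Set.range fun m : Fin N → ℤ =>
        ((⌈polyGauge Q (fun i => (m i : ℝ))⌉ : ℝ) - polyGauge Q (fun i => (m i : ℝ)))) < 1 ∧
    (sSup (Set.range fun m : Fin N → ℤ =>
        ((⌈polyGauge Q (fun i => (m i : ℝ))⌉ : ℝ) - polyGauge Q (fun i => (m i : ℝ)))) = 0 ∨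
      (1 / 2 : ℝ) ≤ sSup (Set.range fun m : Fin N → ℤ =>
        ((⌈polyGauge Q (fun i => (m i : ℝ))⌉ : ℝ) - polyGauge Q (fun i => (m i : ℝ))))) := by
  obtain ⟨F, rfl⟩ := hQ
  simp only [polyGauge_eq_gauge ⟨0, interior_subset h0⟩]
  obtain ⟨D, hD, hDk⟩ := exists_nat_mul_gauge_eq_intCast F.finite_toSet h0
  set Q := convexHull ℝ ((fun (v : Fin N → ℚ) (i : Fin N) => (v i : ℝ)) '' ↑F)
  set S := range fun m : Fin N → ℤ =>
    (⌈gauge Q fun i => (m i : ℝ)⌉ : ℝ) - gauge Q fun i => (m i : ℝ)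
  have hS_le : ∀ s ∈ S, s ≤ 1 - 1 / D := by
    rintro _ ⟨m, rfl⟩
    obtain ⟨k, hk⟩ := hDk m
    exact Int.ceil_sub_le_one_sub_inv hD hk
  have hS_zero : (0 : ℝ) ∈ S := ⟨0, by simp [← Pi.zero_def]⟩
  have hS_double : ∀ s ∈ S, s < 1 / 2 → 2 * s ∈ S := by
    rintro _ ⟨m, rfl⟩ hm
    refine ⟨2 • m, ?_⟩
    have h2m : (fun i => (((2 • m) i : ℤ) : ℝ)) = (2 : ℝ) • fun i => (m i : ℝ) := by
      ext; simp
    simp only [h2m, gauge_smul_of_nonneg (zero_le_two : (0 : ℝ) ≤ 2), smul_eq_mul]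
    exact Int.ceil_two_mul_sub_eq hm
  have hD1 : (0 : ℝ) < 1 / D := by positivity
  exact ⟨(csSup_le ⟨0, hS_zero⟩ hS_le).trans_lt (by linarith),
    csSup_eq_zero_or_half_le ⟨_, hS_le⟩ hS_zero hS_double⟩
end

section
/- Let f : ℤ → ℂ be a quasi-polynomial (i.e., there exist N ≥ 1 and polynomials Q₀,…,Q_{N−1} ∈ ℂ[x] with f(n) = Q_i(n) whenever n ≡ i mod N). Then, as formal identities of rational functions, ∑_{i<0} f(i) t^i = − ∑_{i≥0} f(i) t^i; i.e., the generating function of f over nonnegative integers, which is a rational function of t, when expanded as a Laurent series at infinity, gives the negative of the values of f at negative integers. -/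
/-!
Let `N` be a period of `f`. The difference `Δ f (n) = f (n + N) - f n` is again a quasi-polynomial
of period `N`, of lower degree, so some iterate `Δ^[d] f` vanishes, and it suffices to show that
reciprocity passes from `Δ f` to `f`. With `c = ∑_{n<N} f(n) tⁿ`, the two generating functions
satisfy `(t^N - 1) G₊(f) = -(t^N G₊(Δ f) + c)` and, in `u = 1/t`,
`G₋(Δ f) = (u^N - 1) G₋(f) + u^N c(1/u)`. So if `p/q` represents `G₊(Δ f)` and `-p/q` represents
`G₋(Δ f)`, then `-(t^N p + q c) / (q (t^N - 1))` does the same for `f`.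
-/

open Polynomial fwdDiff
open scoped PowerSeries

variable {R : Type*} [CommRing R]

lemma Polynomial.reflect_X_pow_sub_one (N : ℕ) : (X ^ N - 1 : R[X]).reflect N = 1 - X ^ N := by
  rw [reflect_sub, reflect_monomial, reflect_one, revAt_le le_rfl, Nat.sub_self, pow_zero]

namespace QuasiPolynomial

noncomputable def posSeries (f : ℤ → R) : R⟦X⟧ := PowerSeries.mk fun n : ℕ => f n

/-- `∑_{n < 0} f(n) tⁿ`, written as a power series in `u = 1/t`. -/
noncomputable def negSeries (f : ℤ → R) : R⟦X⟧ :=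
  PowerSeries.X * PowerSeries.mk fun n : ℕ => f (-1 - n)

/-- `q G₊ = p` and `q G₋ = -p` as rational functions: with `r* = u^D r(1/u)` the reflection,
the second identity cleared of denominators in `u = 1/t` reads `q* G₋ = -p*`. -/
def HasLaurentReciprocity (f : ℤ → R) : Prop :=
  ∃ (p q : R[X]) (D : ℕ), q ≠ 0 ∧ p.natDegree ≤ D ∧ q.natDegree ≤ D ∧
    (q : R⟦X⟧) * posSeries f = p ∧ (q.reflect D : R⟦X⟧) * negSeries f = -(p.reflect D : R⟦X⟧)

lemma coeff_negSeries (f : ℤ → R) (n : ℕ) :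
    PowerSeries.coeff n (negSeries f) = if n = 0 then 0 else f (-n) := by
  rcases n with _ | n
  · simp [negSeries]
  · simp [negSeries, PowerSeries.coeff_succ_X_mul, sub_eq_add_neg]

lemma X_pow_sub_one_mul_posSeries (f : ℤ → R) (N : ℕ) :
    (PowerSeries.X ^ N - 1) * posSeries f =
      -(PowerSeries.X ^ N * posSeries (Δ_[(N : ℤ)] f) +
        (PowerSeries.trunc N (posSeries f) : R⟦X⟧)) := by
  ext n
  simp only [sub_mul, one_mul, map_sub, map_neg, map_add, PowerSeries.coeff_X_pow_mul',
    Polynomial.coeff_coe, PowerSeries.coeff_trunc, posSeries, PowerSeries.coeff_mk, fwdDiff]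
  split_ifs with h
  · omega
  · push_cast [h]
    rw [sub_add_cancel]
    ring
  · ring
  · omega

lemma negSeries_fwdDiff (f : ℤ → R) (N : ℕ) :
    negSeries (Δ_[(N : ℤ)] f) =
      (PowerSeries.X ^ N - 1) * negSeries f +
        ((PowerSeries.trunc N (posSeries f)).reflect N : R⟦X⟧) := by
  ext n
  simp only [sub_mul, one_mul, map_sub, map_add, PowerSeries.coeff_X_pow_mul',
    Polynomial.coeff_coe, coeff_reflect, PowerSeries.coeff_trunc, posSeries, PowerSeries.coeff_mk,
    coeff_negSeries, fwdDiff]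
  rcases Nat.lt_or_ge N n with hNn | hnN
  · rw [revAt_eq_self_of_lt hNn]
    simp (disch := omega) only [if_neg, if_pos, add_zero]
    push_cast [hNn.le]
    ring_nf
  · rw [revAt_le hnN]
    rcases Nat.eq_zero_or_pos n with rfl | hn
    · simp
    rcases hnN.eq_or_lt with rfl | hnN
    · simp only [hn.ne', ↓reduceIte, neg_add_cancel, le_refl, tsub_self, zero_sub, hn,
        CharP.cast_eq_zero]
      ring
    · simp (disch := omega) only [if_neg, if_pos, zero_sub]
      push_cast [hnN.le]
      ring_nf

lemma hasLaurentReciprocity_zero [Nontrivial R] : HasLaurentReciprocity (0 : ℤ → R) :=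
  ⟨0, 1, 0, one_ne_zero, by simp, by simp, by ext; simp [posSeries], by ext; simp [coeff_negSeries]⟩

lemma HasLaurentReciprocity.of_fwdDiff [Nontrivial R] {f : ℤ → R} {N : ℕ} (hN : 0 < N)
    (h : HasLaurentReciprocity (Δ_[(N : ℤ)] f)) : HasLaurentReciprocity f := by
  obtain ⟨p, q, D, hq, hpD, hqD, hpos, hneg⟩ := h
  set c := PowerSeries.trunc N (posSeries f)
  have hcN : c.natDegree ≤ N := natDegree_le_of_degree_le (PowerSeries.degree_trunc_lt _ _).le
  have hmonic : (X ^ N - 1 : R[X]).Monic := monic_X_pow_sub_C 1 hN.ne'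
  have hXN : (X ^ N - 1 : R[X]).natDegree ≤ N := by rw [← C_1, natDegree_X_pow_sub_C]
  refine ⟨-(p * X ^ N + q * c), q * (X ^ N - 1), D + N, hmonic.mul_left_ne_zero hq, ?_, ?_, ?_, ?_⟩
  · rw [natDegree_neg]
    exact natDegree_add_le_of_degree_le (natDegree_mul_le_of_le hpD (natDegree_X_pow_le N))
      (natDegree_mul_le_of_le hqD hcN)
  · exact natDegree_mul_le_of_le hqD hXN
  · simp only [Polynomial.coe_mul, Polynomial.coe_neg, Polynomial.coe_add, Polynomial.coe_sub,
      Polynomial.coe_pow, Polynomial.coe_X, Polynomial.coe_one]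
    linear_combination (q : R⟦X⟧) * X_pow_sub_one_mul_posSeries f N - PowerSeries.X ^ N * hpos
  · rw [reflect_mul q _ hqD hXN, reflect_X_pow_sub_one, reflect_neg, reflect_add,
      reflect_mul p _ hpD (natDegree_X_pow_le N), reflect_mul q _ hqD hcN, reflect_monomial,
      revAt_le le_rfl, Nat.sub_self, pow_zero, mul_one]
    simp only [Polynomial.coe_mul, Polynomial.coe_neg, Polynomial.coe_add, Polynomial.coe_sub,
      Polynomial.coe_pow, Polynomial.coe_X, Polynomial.coe_one]
    linear_combination (q.reflect D : R⟦X⟧) * negSeries_fwdDiff f N - hneg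

lemma HasLaurentReciprocity.of_fwdDiff_iter_eq_zero [Nontrivial R] {f : ℤ → R} {N d : ℕ}
    (hN : 0 < N) (h : (Δ_[(N : ℤ)])^[d] f = 0) : HasLaurentReciprocity f := by
  induction d generalizing f with
  | zero =>
    obtain rfl : f = 0 := h
    exact hasLaurentReciprocity_zero
  | succ d ih => exact .of_fwdDiff hN (ih h)

lemma fwdDiff_iter_eq_zero_of_quasiPolynomial {f : ℤ → R} {N d : ℕ} {Q : ℕ → R[X]} (hN : 0 < N)
    (hf : ∀ n : ℤ, f n = (Q (n % (N : ℤ)).toNat).eval (n : R))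
    (hd : ∀ i < N, (Q i).natDegree < d) : (Δ_[(N : ℤ)])^[d] f = 0 := by
  funext n
  -- along the residue class of `n`, `f (n + k N)` is the polynomial `P` evaluated at `k`
  set P := (Q (n % (N : ℤ)).toNat).comp (C (N : R) * X + C (n : R))
  have hPd : P.natDegree < d := by
    have hi : (n % (N : ℤ)).toNat < N := by
      have := Int.emod_lt_of_pos n (Int.natCast_pos.2 hN)
      omega
    calc P.natDegree ≤ (Q (n % (N : ℤ)).toNat).natDegree * (C (N : R) * X + C (n : R)).natDegree :=
          natDegree_comp_le
      _ ≤ (Q (n % (N : ℤ)).toNat).natDegree * 1 := by gcongr; exact natDegree_linear_le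
      _ < d := by simpa using hd _ hi
  have hP := congrFun (fwdDiff_iter_eq_zero_of_degree_lt hPd) 0
  rw [fwdDiff_iter_eq_sum_shift, Pi.zero_apply] at hP
  rw [Pi.zero_apply, fwdDiff_iter_eq_sum_shift, ← hP]
  refine Finset.sum_congr rfl fun k _ ↦ congrArg _ ?_
  simp only [hf, Int.cast_add, Int.cast_mul, Int.cast_natCast,
    Int.add_mul_emod_self_right, nsmul_eq_mul, mul_one, zero_add, map_natCast, map_intCast,
    eval_comp, eval_add, eval_mul, eval_natCast, eval_X, eval_intCast, P]
  rw [add_comm, mul_comm]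

end QuasiPolynomial

/-- If `f : ℤ → ℂ` is a quasi-polynomial, then, as an identity of rational
functions, `∑_{i<0} f(i) t^i = − ∑_{i≥0} f(i) t^i`.  This is encoded as: there are polynomials
`p, q` with `q ≠ 0` such that `q(t)·∑_{n≥0} f(n) tⁿ = p(t)` (so `G₊ = p/q`), and, writing the
negative-index part in the variable `u = 1/t` as `u·B(u)` with `B(u) = ∑_{n≥0} f(−1−n) uⁿ`,
the reflected identity `q*(u)·u·B(u) = −p*(u)` holds, where `r* = reflect D r` denotes
`u^D·r(1/u)`; this says exactly `G₋(t) = −p(t)/q(t)` as rational functions. -/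
theorem quasiPolynomial_laurent_reciprocity (f : ℤ → ℂ)
    (hf : ∃ N : ℕ, 0 < N ∧ ∃ Q : ℕ → Polynomial ℂ,
      ∀ n : ℤ, f n = (Q (n % (N : ℤ)).toNat).eval (n : ℂ)) :
    ∃ (p q : Polynomial ℂ) (D : ℕ), q ≠ 0 ∧
      (q : PowerSeries ℂ) * PowerSeries.mk (fun n : ℕ => f n) = (p : PowerSeries ℂ) ∧
      ((q.reflect D : Polynomial ℂ) : PowerSeries ℂ) *
          (PowerSeries.X * PowerSeries.mk (fun n : ℕ => f (-1 - n))) =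
        -(((p.reflect D : Polynomial ℂ) : PowerSeries ℂ)) := by
  obtain ⟨N, hN, Q, hQ⟩ := hf
  have hd : ∀ i < N, (Q i).natDegree < (Finset.range N).sup (natDegree ∘ Q) + 1 :=
    fun i hi ↦ Nat.lt_succ_of_le (Finset.le_sup (f := natDegree ∘ Q) (Finset.mem_range.2 hi))
  obtain ⟨p, q, D, hq, -, -, hpos, hneg⟩ :=
    QuasiPolynomial.HasLaurentReciprocity.of_fwdDiff_iter_eq_zero hN
      (QuasiPolynomial.fwdDiff_iter_eq_zero_of_quasiPolynomial hN hQ hd)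
  exact ⟨p, q, D, hq, hpos, hneg⟩
end

section
/- Let N be an integral (cancellative) commutative monoid, let M₁, M₂ ⊂ N be finitely generated submonoids, and for i = 1,2 let X_i ⊂ N be a finitely generated M_i-module (i.e., a subset with M_i + X_i ⊂ X_i generated by finitely many elements under the M_i-action). Then M₁ ∩ M₂ is a finitely generated monoid and X₁ ∩ X₂ is a finitely generated (M₁ ∩ M₂)-module. -/
/-!
Write `Mᵢ` as the range of `φᵢ : ℕ^{nᵢ} →+ N`. Then `M₁ ⊓ M₂` is the image under `φ₁ ∘ fst` of
the equalizer of `φ₁ ∘ fst` and `φ₂ ∘ snd` on `ℕ^{n₁} × ℕ^{n₂}`, which is finitely generated by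
Gordan's lemma (`AddSubmonoid.fg_eqLocusM`). Since `Xᵢ` is a finite union of translates `Mᵢ + c`,
it suffices to treat `(M₁ + c₁) ∩ (M₂ + c₂)`, whose points come from the solutions of
`φ₁ a + c₁ = φ₂ b + c₂`. By Dickson's lemma every solution lies above one of finitely many minimal
solutions, and by cancellation in `N` the difference lies in the equalizer.
-/

open Pointwise AddMonoidHom

theorem exists_finset_subset_forall_exists_le {α : Type*} [PartialOrder α]
    [WellQuasiOrderedLE α] (S : Set α) : ∃ E : Finset α, ↑E ⊆ S ∧ ∀ a ∈ S, ∃ e ∈ E, e ≤ a := by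
  have hmin : {x | Minimal (· ∈ S) x}.Finite :=
    WellQuasiOrderedLE.finite_of_isAntichain (setOfPred_minimal_antichain _)
  refine ⟨hmin.toFinset, fun x hx ↦ (hmin.mem_toFinset.1 hx).prop, fun a ha ↦ ?_⟩
  obtain ⟨e, hea, he⟩ := (Set.isPWO_of_wellQuasiOrderedLE S).exists_le_minimal ha
  exact ⟨e, hmin.mem_toFinset.2 he, hea⟩

theorem AddMonoidHom.map_eqLocusM_comp_fst_comp_snd {A B N : Type*} [AddMonoid A] [AddMonoid B]
    [AddMonoid N] (φ : A →+ N) (ψ : B →+ N) :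
    ((φ.comp (fst A B)).eqLocusM (ψ.comp (snd A B))).map (φ.comp (fst A B)) =
      mrange φ ⊓ mrange ψ := by
  ext y
  simp only [AddSubmonoid.mem_map, AddSubmonoid.mem_inf, mem_mrange, mem_eqLocusM, coe_comp,
    coe_fst, coe_snd, Function.comp_apply, Prod.exists]
  constructor
  · rintro ⟨a, b, hab, rfl⟩
    exact ⟨⟨a, rfl⟩, b, hab.symm⟩
  · rintro ⟨⟨a, rfl⟩, b, hb⟩
    exact ⟨a, b, hb.symm, rfl⟩

section WellQuasiOrdered

variable {A B N : Type*} [AddCommMonoid A] [PartialOrder A] [CanonicallyOrderedAdd A]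
  [WellQuasiOrderedLE A] [AddCommMonoid B] [PartialOrder B] [CanonicallyOrderedAdd B]
  [WellQuasiOrderedLE B] [AddCancelCommMonoid N]

theorem exists_finset_forall_eq_add_mem_eqLocusM (f g : A →+ N) (c₁ c₂ : N) :
    ∃ E : Finset A, (∀ e ∈ E, f e + c₁ = g e + c₂) ∧
      ∀ a, f a + c₁ = g a + c₂ → ∃ e ∈ E, ∃ s ∈ f.eqLocusM g, a = e + s := by
  obtain ⟨E, hES, hE⟩ := exists_finset_subset_forall_exists_le {a | f a + c₁ = g a + c₂}
  refine ⟨E, fun e he ↦ hES he, fun a ha ↦ ?_⟩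
  obtain ⟨e, he, hea⟩ := hE a ha
  obtain ⟨s, rfl⟩ := exists_add_of_le hea
  refine ⟨e, he, s, add_left_cancel (a := f e + c₁) ?_, rfl⟩
  calc f e + c₁ + f s = f (e + s) + c₁ := by rw [map_add]; abel
    _ = g (e + s) + c₂ := ha
    _ = g e + c₂ + g s := by rw [map_add]; abel
    _ = f e + c₁ + g s := by rw [hES he]

theorem exists_finset_inter_add_singleton_eq (φ : A →+ N) (ψ : B →+ N) (c₁ c₂ : N) :
    ∃ E : Finset N, (mrange φ + {c₁} : Set N) ∩ (mrange ψ + {c₂}) =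
      ((mrange φ ⊓ mrange ψ : AddSubmonoid N) : Set N) + E := by
  classical
  obtain ⟨E, hE, hsol⟩ :=
    exists_finset_forall_eq_add_mem_eqLocusM (φ.comp (fst A B)) (ψ.comp (snd A B)) c₁ c₂
  refine ⟨E.image fun e ↦ φ e.1 + c₁, Set.ext fun y ↦ ⟨?_, ?_⟩⟩
  · simp only [Set.add_singleton]
    rintro ⟨⟨_, ⟨a, rfl⟩, rfl⟩, ⟨_, ⟨b, rfl⟩, hab⟩⟩
    obtain ⟨e, he, s, hs, hes⟩ := hsol (a, b) hab.symm
    refine ⟨φ s.1, ⟨⟨s.1, rfl⟩, s.2, hs.symm⟩, φ e.1 + c₁, Finset.mem_image_of_mem _ he, ?_⟩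
    have ha : a = e.1 + s.1 := congrArg Prod.fst hes
    show φ s.1 + (φ e.1 + c₁) = φ a + c₁
    rw [ha, map_add]
    abel
  · rintro ⟨_, ⟨⟨a, rfl⟩, b, hb⟩, _, hx, rfl⟩
    obtain ⟨e, he, rfl⟩ := Finset.mem_image.1 hx
    have h₁ : φ (a + e.1) + c₁ = φ a + (φ e.1 + c₁) := by rw [map_add, add_assoc]
    have h₂ : ψ (b + e.2) + c₂ = φ a + (φ e.1 + c₁) := by
      rw [map_add, add_assoc, hb]
      exact congrArg (φ a + ·) (hE e he).symm
    beta_reduce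
    exact ⟨h₁ ▸ Set.add_mem_add ⟨_, rfl⟩ rfl, h₂ ▸ Set.add_mem_add ⟨_, rfl⟩ rfl⟩

end WellQuasiOrdered

theorem exists_finset_add_inter_add_eq {N : Type*} [Add N] {M₁ M₂ M : Set N}
    (h : ∀ c₁ c₂ : N, ∃ E : Finset N, (M₁ + {c₁}) ∩ (M₂ + {c₂}) = M + E) (F₁ F₂ : Finset N) :
    ∃ F : Finset N, (M₁ + F₁) ∩ (M₂ + F₂) = M + F := by
  classical
  choose E hE using h
  refine ⟨(F₁ ×ˢ F₂).biUnion fun c ↦ E c.1 c.2, ?_⟩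
  calc (M₁ + F₁) ∩ (M₂ + F₂) = ⋃ c ∈ F₁ ×ˢ F₂, (M₁ + {c.1}) ∩ (M₂ + {c.2}) := by
        ext y
        simp only [Set.mem_inter_iff, Set.mem_add, Finset.mem_coe, Set.mem_singleton_iff,
          Set.mem_iUnion, Finset.mem_product, Prod.exists, exists_prop]
        aesop
    _ = ⋃ c ∈ F₁ ×ˢ F₂, M + (E c.1 c.2 : Set N) := by simp_rw [hE]
    _ = M + ((F₁ ×ˢ F₂).biUnion fun c ↦ E c.1 c.2 : Finset N) := by
        simp only [Finset.coe_biUnion, Set.add_iUnion₂, Finset.mem_coe]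

theorem AddSubmonoid.setOf_exists_add_eq_add {N : Type*} [AddZeroClass N] (M : AddSubmonoid N)
    (F : Finset N) : {y | ∃ m ∈ M, ∃ x ∈ F, y = m + x} = (M : Set N) + F := by
  ext y
  simp only [Set.mem_ofPred_eq, Set.mem_add, SetLike.mem_coe, eq_comm]

/-- In a cancellative (integral) commutative monoid `N`, if `M₁, M₂` are
finitely generated submonoids and `Xᵢ` is a finitely generated `Mᵢ`-module (a subset with
`Mᵢ + Xᵢ ⊆ Xᵢ` of the form `Mᵢ + (finite set)`), then `M₁ ⊓ M₂` is a finitely generated monoid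
and `X₁ ∩ X₂` is a finitely generated `(M₁ ⊓ M₂)`-module. -/
theorem inter_fg_monoid_module {N : Type} [AddCancelCommMonoid N]
    (M₁ M₂ : AddSubmonoid N) (h₁ : M₁.FG) (h₂ : M₂.FG)
    (X₁ X₂ : Set N)
    (hX₁mod : ∀ m ∈ M₁, ∀ x ∈ X₁, m + x ∈ X₁)
    (hX₂mod : ∀ m ∈ M₂, ∀ x ∈ X₂, m + x ∈ X₂)
    (hX₁fg : ∃ F : Finset N, ↑F ⊆ X₁ ∧ X₁ = {y | ∃ m ∈ M₁, ∃ x ∈ F, y = m + x})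
    (hX₂fg : ∃ F : Finset N, ↑F ⊆ X₂ ∧ X₂ = {y | ∃ m ∈ M₂, ∃ x ∈ F, y = m + x}) :
    (M₁ ⊓ M₂).FG ∧
    (∀ m ∈ M₁ ⊓ M₂, ∀ x ∈ X₁ ∩ X₂, m + x ∈ X₁ ∩ X₂) ∧
    ∃ F : Finset N, ↑F ⊆ X₁ ∩ X₂ ∧
      X₁ ∩ X₂ = {y | ∃ m ∈ M₁ ⊓ M₂, ∃ x ∈ F, y = m + x} := by
  obtain ⟨n₁, φ, rfl⟩ := AddSubmonoid.fg_iff_exists_fin_addMonoidHom.1 h₁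
  obtain ⟨n₂, ψ, rfl⟩ := AddSubmonoid.fg_iff_exists_fin_addMonoidHom.1 h₂
  obtain ⟨F₁, -, rfl⟩ := hX₁fg
  obtain ⟨F₂, -, rfl⟩ := hX₂fg
  refine ⟨?_, fun m hm x hx ↦ ⟨hX₁mod m hm.1 x hx.1, hX₂mod m hm.2 x hx.2⟩, ?_⟩
  · rw [← map_eqLocusM_comp_fst_comp_snd]
    exact (AddSubmonoid.fg_eqLocusM _ _).map _
  · simp only [AddSubmonoid.setOf_exists_add_eq_add]
    obtain ⟨F, hF⟩ :=
      exists_finset_add_inter_add_eq (exists_finset_inter_add_singleton_eq φ ψ) F₁ F₂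
    refine ⟨F, ?_, hF⟩
    rw [hF]
    exact Set.subset_add_right _ (zero_mem _)
end

section
/- Let (Γ, L) be a strongly connected periodic graph, x₀ ∈ V_Γ a vertex, and y ∈ V_Γ a vertex in the same L-orbit as x₀ (so that y − x₀ ∈ L is well-defined). Then d_{P_Γ}(y − x₀) ≤ d_Γ(x₀, y), where d_Γ is the weighted graph distance and d_{P_Γ} is the gauge function of the growth polytope P_Γ. -/
/-!
A shortest walk from `x₀` to `y` projects to a closed walk in `Γ/L` of weight `d_Γ(x₀, y)` and
translation `y − x₀`. Cutting a closed walk at a repeated vertex splits it into two shorter closed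
walks, so it is a concatenation of simple cycles `q`, and each of them satisfies
`μ(q) = w(q) • ν(q) ∈ w(q) • P_Γ`. Since `P_Γ` is convex, `a • P_Γ + b • P_Γ = (a + b) • P_Γ` for
`a, b ≥ 0`, hence `y − x₀ ∈ d_Γ(x₀, y) • P_Γ`.
-/

open Pointwise

/-- An `n`-dimensional periodic graph, presented concretely: since the action of `L ≅ ℤⁿ` on the
vertex/edge sets is free with finite quotient, vertices are `(Fin n → ℤ) × V0` and edges are
translates of finitely many edge classes `E0`; the class `e` joins `(0, srcV e)` to
`(vec e, tgtV e)` and has weight `wt e > 0`. -/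
structure PeriodicGraph (n : ℕ) where
  V0 : Type
  E0 : Type
  fintypeV0 : Fintype V0
  fintypeE0 : Fintype E0
  srcV : E0 → V0
  tgtV : E0 → V0
  vec : E0 → Fin n → ℤ
  wt : E0 → ℕ
  wt_pos : ∀ e, 0 < wt e

namespace PeriodicGraph

variable {n : ℕ}

/-- `Reaches G x y w`: there is a directed walk in `Γ` from `x` to `y` of total weight `w`. -/
inductive Reaches (G : PeriodicGraph n) :
    ((Fin n → ℤ) × G.V0) → ((Fin n → ℤ) × G.V0) → ℕ → Prop
  | refl (x : (Fin n → ℤ) × G.V0) : Reaches G x x 0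
  | tail {x : (Fin n → ℤ) × G.V0} {w : ℕ} (u : Fin n → ℤ) (e : G.E0) :
      Reaches G x (u, G.srcV e) w → Reaches G x (u + G.vec e, G.tgtV e) (w + G.wt e)

/-- `Γ` is strongly connected: any vertex reaches any other by a directed walk. -/
def StronglyConnected (G : PeriodicGraph n) : Prop :=
  ∀ x y : (Fin n → ℤ) × G.V0, ∃ w : ℕ, G.Reaches x y w

/-- The weighted graph distance `d_Γ(x,y)` (the minimal weight of a walk from `x` to `y`). -/
noncomputable def dist (G : PeriodicGraph n) (x y : (Fin n → ℤ) × G.V0) : ℕ :=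
  sInf {w : ℕ | G.Reaches x y w}

/-- A cycle in the quotient graph `Γ/L`: a nonempty chained list of edge classes, closed, whose
visited vertices are pairwise distinct. -/
def IsQCycle (G : PeriodicGraph n) (l : List G.E0) : Prop :=
  ∃ h : l ≠ [], l.Chain' (fun e f => G.tgtV e = G.srcV f) ∧
    G.tgtV (l.getLast h) = G.srcV (l.head h) ∧ (l.map G.tgtV).Nodup

/-- The net translation vector `μ(⟨q⟩)` of a quotient walk. -/
def qvec (G : PeriodicGraph n) (l : List G.E0) : Fin n → ℤ := (l.map G.vec).sum

/-- The total weight `w(q)` of a quotient walk. -/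
def qwt (G : PeriodicGraph n) (l : List G.E0) : ℕ := (l.map G.wt).sum

/-- The normalization `ν(q) = μ(⟨q⟩)/w(q)` of a quotient cycle. -/
noncomputable def nu (G : PeriodicGraph n) (l : List G.E0) : Fin n → ℝ :=
  (G.qwt l : ℝ)⁻¹ • fun i => (G.qvec l i : ℝ)

/-- The growth polytope `P_Γ`: the convex hull of `0` together with the normalized translation
vectors of all cycles of `Γ/L`. -/
noncomputable def growthPolytope (G : PeriodicGraph n) : Set (Fin n → ℝ) :=
  convexHull ℝ (insert 0 {x : Fin n → ℝ | ∃ l : List G.E0, G.IsQCycle l ∧ x = G.nu l})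

/-- The gauge `d_P(y) = inf {t ≥ 0 | y ∈ t·P}` of a set `P`. -/
noncomputable def pgauge {n : ℕ} (P : Set (Fin n → ℝ)) (y : Fin n → ℝ) : ℝ :=
  sInf {t : ℝ | 0 ≤ t ∧ y ∈ t • P}

/-- A periodic realization `Φ : V_Γ → L ⊗ ℝ`, i.e. `Φ(u + x) = u + Φ(x)` for `u ∈ L`. -/
def IsRealization (G : PeriodicGraph n) (Φ : (Fin n → ℤ) × G.V0 → Fin n → ℝ) : Prop :=
  ∀ (u : Fin n → ℤ) (x : (Fin n → ℤ) × G.V0),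
    Φ (u + x.1, x.2) = (fun i => (u i : ℝ)) + Φ x

/-- `x₀` is `P`-initial: every nonzero vertex (extreme point) `u` of `P_Γ` is the normalized
vector of some cycle of `Γ/L` whose support contains the image of `x₀`. -/
def PInitial (G : PeriodicGraph n) (x₀ : (Fin n → ℤ) × G.V0) : Prop :=
  ∀ u ∈ Set.extremePoints ℝ G.growthPolytope, u ≠ 0 →
    ∃ l : List G.E0, G.IsQCycle l ∧ G.nu l = u ∧ x₀.2 ∈ l.map G.tgtV

end PeriodicGraph

/-- A function `ℕ → ℕ` is of quasi-polynomial type if it eventually agrees with a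
quasi-polynomial. -/
def IsQuasiPolynomialType (f : ℕ → ℕ) : Prop :=
  ∃ Np : ℕ, 0 < Np ∧ ∃ Q : ℕ → Polynomial ℚ, ∃ M : ℕ,
    ∀ i : ℕ, M ≤ i → (f i : ℚ) = (Q (i % Np)).eval (i : ℚ)

theorem List.exists_eq_append_cons_append_cons_of_not_nodup_map {α β : Type*} (f : α → β)
    {l : List α} (h : ¬ (l.map f).Nodup) :
    ∃ l₁ a l₂ b l₃, l = l₁ ++ a :: (l₂ ++ b :: l₃) ∧ f a = f b := by
  induction l with
  | nil => simp at h
  | cons a l ih =>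
    rw [List.map_cons, List.nodup_cons, not_and_or, not_not] at h
    rcases h with h | h
    · obtain ⟨b, hb, hab⟩ := List.mem_map.mp h
      obtain ⟨l₂, l₃, rfl⟩ := List.append_of_mem hb
      exact ⟨[], a, l₂, b, l₃, rfl, hab.symm⟩
    · obtain ⟨l₁, b, l₂, c, l₃, rfl, hbc⟩ := ih h
      exact ⟨a :: l₁, b, l₂, c, l₃, rfl, hbc⟩

namespace PeriodicGraph

variable {n : ℕ} (G : PeriodicGraph n)

def IsQWalk : List G.E0 → G.V0 → G.V0 → Prop
  | [], u, v => u = v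
  | e :: l, u, v => G.srcV e = u ∧ IsQWalk l (G.tgtV e) v

variable {G}

theorem isQWalk_append {l₁ l₂ : List G.E0} {u w : G.V0} :
    G.IsQWalk (l₁ ++ l₂) u w ↔ ∃ v, G.IsQWalk l₁ u v ∧ G.IsQWalk l₂ v w := by
  induction l₁ generalizing u with
  | nil => simp [IsQWalk]
  | cons e l₁ ih => simp [IsQWalk, ih, and_assoc]

theorem IsQWalk.isChain {l : List G.E0} {u v : G.V0} (h : G.IsQWalk l u v) :
    l.IsChain (fun e f => G.tgtV e = G.srcV f) := by
  induction l generalizing u with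
  | nil => exact .nil
  | cons e l ih =>
    cases l with
    | nil => exact .singleton e
    | cons f l => exact .cons_cons h.2.1.symm (ih h.2)

theorem IsQWalk.srcV_head {l : List G.E0} {u v : G.V0} (h : G.IsQWalk l u v) (hl : l ≠ []) :
    G.srcV (l.head hl) = u := by
  cases l with
  | nil => contradiction
  | cons e l => exact h.1

theorem IsQWalk.tgtV_getLast {l : List G.E0} {u v : G.V0} (h : G.IsQWalk l u v) (hl : l ≠ []) :
    G.tgtV (l.getLast hl) = v := by
  induction l generalizing u with
  | nil => contradiction
  | cons e l ih =>
    cases l with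
    | nil => exact h.2
    | cons f l => exact ih h.2 (List.cons_ne_nil f l)

theorem IsQWalk.isQCycle {l : List G.E0} {v : G.V0} (h : G.IsQWalk l v v) (hl : l ≠ [])
    (hnd : (l.map G.tgtV).Nodup) : G.IsQCycle l :=
  ⟨hl, h.isChain, by rw [h.tgtV_getLast, h.srcV_head], hnd⟩

theorem IsQWalk.split_of_tgtV_eq {l₁ l₂ l₃ : List G.E0} {e f : G.E0} {u v : G.V0}
    (h : G.IsQWalk (l₁ ++ e :: (l₂ ++ f :: l₃)) u v) (hef : G.tgtV e = G.tgtV f) :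
    G.IsQWalk (l₂ ++ [f]) (G.tgtV f) (G.tgtV f) ∧ G.IsQWalk (l₁ ++ e :: l₃) u v := by
  simp only [isQWalk_append, IsQWalk] at h ⊢
  obtain ⟨a, h₁, rfl, b, h₂, rfl, h₃⟩ := h
  exact ⟨⟨_, hef ▸ h₂, rfl, trivial⟩, _, h₁, rfl, hef ▸ h₃⟩

theorem Reaches.exists_isQWalk {x y : (Fin n → ℤ) × G.V0} {w : ℕ} (h : G.Reaches x y w) :
    ∃ l, G.IsQWalk l x.2 y.2 ∧ G.qvec l = y.1 - x.1 ∧ G.qwt l = w := by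
  induction h with
  | refl => exact ⟨[], rfl, by simp [qvec], rfl⟩
  | tail u e _ ih =>
    obtain ⟨l, hl, hvec, hwt⟩ := ih
    refine ⟨l ++ [e], isQWalk_append.mpr ⟨_, hl, rfl, rfl⟩, ?_, ?_⟩
    · simp only [qvec, List.map_append, List.sum_append] at hvec ⊢
      simp only [hvec, List.map_singleton, List.sum_singleton]
      abel
    · simp [qwt, ← hwt]

theorem qwt_pos {l : List G.E0} (hl : l ≠ []) : 0 < G.qwt l := by
  obtain ⟨e, l, rfl⟩ := List.exists_cons_of_ne_nil hl
  simpa [qwt] using Nat.add_pos_left (G.wt_pos e) _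

theorem convex_growthPolytope : Convex ℝ G.growthPolytope :=
  convex_convexHull ℝ _

theorem zero_mem_growthPolytope : (0 : Fin n → ℝ) ∈ G.growthPolytope :=
  subset_convexHull ℝ _ (Set.mem_insert _ _)

theorem nu_mem_growthPolytope {l : List G.E0} (hl : G.IsQCycle l) : G.nu l ∈ G.growthPolytope :=
  subset_convexHull ℝ _ (Set.mem_insert_of_mem _ ⟨l, hl, rfl⟩)

theorem IsQCycle.qvec_mem_smul_growthPolytope {l : List G.E0} (hl : G.IsQCycle l) :
    (fun i => (G.qvec l i : ℝ)) ∈ (G.qwt l : ℝ) • G.growthPolytope := by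
  have hw : (G.qwt l : ℝ) ≠ 0 := (Nat.cast_pos.mpr (G.qwt_pos hl.1)).ne'
  rw [Set.mem_smul_set_iff_inv_smul_mem₀ hw]
  exact nu_mem_growthPolytope hl

theorem IsQWalk.qvec_mem_smul_growthPolytope {l : List G.E0} {v : G.V0} (h : G.IsQWalk l v v) :
    (fun i => (G.qvec l i : ℝ)) ∈ (G.qwt l : ℝ) • G.growthPolytope := by
  by_cases hl : l = []
  · subst hl
    rw [qwt, List.map_nil, List.sum_nil, Nat.cast_zero,
      Set.zero_smul_set ⟨0, G.zero_mem_growthPolytope⟩]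
    exact funext fun _ => Int.cast_zero
  by_cases hnd : (l.map G.tgtV).Nodup
  · exact (h.isQCycle hl hnd).qvec_mem_smul_growthPolytope
  obtain ⟨l₁, e, l₂, f, l₃, hsplit, hef⟩ :=
    List.exists_eq_append_cons_append_cons_of_not_nodup_map G.tgtV hnd
  obtain ⟨hinner, houter⟩ := (hsplit ▸ h).split_of_tgtV_eq hef
  have hvec : G.qvec (l₁ ++ e :: (l₂ ++ f :: l₃)) =
      G.qvec (l₂ ++ [f]) + G.qvec (l₁ ++ e :: l₃) := by
    simp only [qvec, List.map_append, List.map_cons, List.map_nil, List.sum_append,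
      List.sum_cons, List.sum_nil]
    abel
  have hwt : G.qwt (l₁ ++ e :: (l₂ ++ f :: l₃)) =
      G.qwt (l₂ ++ [f]) + G.qwt (l₁ ++ e :: l₃) := by
    simp only [qwt, List.map_append, List.map_cons, List.map_nil, List.sum_append,
      List.sum_cons, List.sum_nil]
    omega
  rw [hsplit, hwt, Nat.cast_add,
    G.convex_growthPolytope.add_smul (by positivity) (by positivity), hvec]
  convert Set.add_mem_add hinner.qvec_mem_smul_growthPolytope houter.qvec_mem_smul_growthPolytope
    using 1
  funext i
  simp only [Pi.add_apply, Int.cast_add]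
termination_by l.length
decreasing_by
  all_goals simp only [hsplit, List.length_append, List.length_cons, List.length_nil]; omega

theorem pgauge_le_of_mem_smul {P : Set (Fin n → ℝ)} {y : Fin n → ℝ} {t : ℝ} (ht : 0 ≤ t)
    (hy : y ∈ t • P) : pgauge P y ≤ t :=
  csInf_le ⟨0, fun _ hs => hs.1⟩ ⟨ht, hy⟩

end PeriodicGraph

/-- For a strongly connected periodic graph, a vertex `x₀` and a vertex `y` in
the same `L`-orbit, the gauge of `y − x₀` with respect to the growth polytope is at most the
weighted graph distance: `d_{P_Γ}(y − x₀) ≤ d_Γ(x₀, y)`. -/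
theorem pgauge_le_dist {n : ℕ} (G : PeriodicGraph n) (hsc : G.StronglyConnected)
    (x₀ y : (Fin n → ℤ) × G.V0) (hxy : y.2 = x₀.2) :
    PeriodicGraph.pgauge G.growthPolytope (fun i => ((y.1 i - x₀.1 i : ℤ) : ℝ)) ≤
      (G.dist x₀ y : ℝ) := by
  obtain ⟨w, hw⟩ := hsc x₀ y
  have hmin : G.Reaches x₀ y (G.dist x₀ y) := Nat.sInf_mem ⟨w, hw⟩
  obtain ⟨l, hl, hvec, hwt⟩ := hmin.exists_isQWalk
  rw [hxy] at hl
  have hmem := hl.qvec_mem_smul_growthPolytope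
  rw [hvec, hwt] at hmem
  exact PeriodicGraph.pgauge_le_of_mem_smul (Nat.cast_nonneg _) hmem
end
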